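/- arXiv:1812.09896 — 5 statements merged into one kernel-verified Lean document; each statement's English description precedes it below -/
import Mathlib

section
/- In W, the elements s₁s₃ and s₂s₄ commute, and the subgroup of W generated by s₁s₃ and s₂s₄ is isomorphic to ℤ × ℤ (free abelian of rank 2). In particular W contains a subgroup isomorphic to ℤ × ℤ. -/
/-! Sending `s₁, s₃` to the two reflections `sr 0, sr 1` of the infinite dihedral group in the
first factor and `s₂, s₄` to those of the second factor respects the Coxeter relations, so it
defines a homomorphism `W → D∞ × D∞`. It maps `s₁s₃` and `s₂s₄` to `(r 1, 1)` and `(1, r 1)`, which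
generate a copy of `ℤ × ℤ`; hence `(m, n) ↦ (s₁s₃)^m (s₂s₄)^n` is injective. -/

/-- The Coxeter matrix of the 4-cycle: off-diagonal entries are `2` for cyclically adjacent
indices and `0` (i.e. `∞`) for the two opposite pairs. -/
def C4 : CoxeterMatrix (Fin 4) where
  M := Matrix.of fun i j : Fin 4 ↦
    if i = j then 1
    else if (i.val + 1) % 4 = j.val ∨ (j.val + 1) % 4 = i.val then 2 else 0
  off_diagonal := by
    intro i i' h
    fin_cases i <;> fin_cases i' <;> simp_all

/-- `W`, the right-angled Coxeter group of the 4-cycle. -/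
abbrev W : Type := C4.Group

/-- The simple reflections `s₁, s₂, s₃, s₄` of `W`, indexed by `Fin 4`
(so `s 0 = s₁`, `s 1 = s₂`, `s 2 = s₃`, `s 3 = s₄`). -/
def s (i : Fin 4) : W := C4.simple i

theorem CoxeterSystem.commute_simple_of_eq_two {B G : Type*} [Group G] {M : CoxeterMatrix B}
    (cs : CoxeterSystem M G) {i i' : B} (h : M i i' = 2) :
    Commute (cs.simple i) (cs.simple i') := by
  have hpow := cs.simple_mul_simple_pow i i'
  rwa [h, pow_two, mul_eq_one_iff_eq_inv, mul_inv_rev, cs.inv_simple, cs.inv_simple] at hpow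

namespace Commute

variable {G : Type*} [Group G] {a b : G}

def zpowersPairHom (hab : Commute a b) : Multiplicative ℤ × Multiplicative ℤ →* G :=
  (zpowersHom G a).noncommCoprod (zpowersHom G b) fun m n ↦ by
    simpa only [zpowersHom_apply] using hab.zpow_zpow m.toAdd n.toAdd

theorem range_zpowersPairHom (hab : Commute a b) :
    (zpowersPairHom hab).range = Subgroup.closure {a, b} := by
  simp only [zpowersPairHom, MonoidHom.noncommCoprod_range, Subgroup.range_zpowersHom,
    Subgroup.zpowers_eq_closure, ← Subgroup.closure_union, Set.singleton_union]

theorem injective_zpowersPairHom_of_map_eq (hab : Commute a b) {H K : Type*} [Group H] [Group K]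
    (φ : G →* H × K) {x : H} {y : K} (ha : φ a = (x, 1)) (hb : φ b = (1, y))
    (hx : ¬IsOfFinOrder x) (hy : ¬IsOfFinOrder y) :
    Function.Injective (zpowersPairHom hab) := by
  have hcomp : ⇑(φ.comp (zpowersPairHom hab)) = Prod.map (x ^ ·.toAdd) (y ^ ·.toAdd) := by
    ext ⟨m, n⟩ <;> simp [zpowersPairHom, MonoidHom.noncommCoprod_apply, ha, hb]
  refine Function.Injective.of_comp (f := φ) ?_
  rw [← MonoidHom.coe_comp, hcomp]
  exact ((injective_zpow_iff_not_isOfFinOrder.mpr hx).comp Multiplicative.toAdd.injective).prodMap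
    ((injective_zpow_iff_not_isOfFinOrder.mpr hy).comp Multiplicative.toAdd.injective)

end Commute

open DihedralGroup

theorem DihedralGroup.not_isOfFinOrder_r_one : ¬IsOfFinOrder (r 1 : DihedralGroup 0) := by
  rw [← orderOf_eq_zero_iff, orderOf_r_one]

def dihedralPairImage : Fin 4 → DihedralGroup 0 × DihedralGroup 0 :=
  ![(sr 0, 1), (1, sr 0), (sr 1, 1), (1, sr 1)]

theorem isLiftable_dihedralPairImage : C4.IsLiftable dihedralPairImage := by
  intro i i'
  fin_cases i <;> fin_cases i' <;>
    simp [dihedralPairImage, C4, pow_succ, Prod.ext_iff, sr_mul_sr, Prod.mul_def]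

noncomputable def toDihedralPair : W →* DihedralGroup 0 × DihedralGroup 0 :=
  C4.toCoxeterSystem.lift ⟨dihedralPairImage, isLiftable_dihedralPairImage⟩

theorem toDihedralPair_s (i : Fin 4) : toDihedralPair (s i) = dihedralPairImage i :=
  C4.toCoxeterSystem.lift_apply_simple isLiftable_dihedralPairImage i

theorem commute_s_of_adjacent {i j : Fin 4} (h : C4.M i j = 2) : Commute (s i) (s j) := by
  simpa [s] using C4.toCoxeterSystem.commute_simple_of_eq_two h

theorem commute_s0_mul_s2_s1_mul_s3 : Commute (s 0 * s 2) (s 1 * s 3) :=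
  ((commute_s_of_adjacent (by decide)).mul_left (commute_s_of_adjacent (by decide))).mul_right
    ((commute_s_of_adjacent (by decide)).mul_left (commute_s_of_adjacent (by decide)))

theorem injective_zpowersPairHom_s : Function.Injective
    commute_s0_mul_s2_s1_mul_s3.zpowersPairHom :=
  commute_s0_mul_s2_s1_mul_s3.injective_zpowersPairHom_of_map_eq toDihedralPair
    (by simp [toDihedralPair_s, dihedralPairImage, sr_mul_sr])
    (by simp [toDihedralPair_s, dihedralPairImage, sr_mul_sr])
    not_isOfFinOrder_r_one not_isOfFinOrder_r_one

/-- In `W`, the elements `s₁s₃` and `s₂s₄` commute, the subgroup they generate is free abelian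
of rank 2 (isomorphic to `ℤ × ℤ`), and in particular `W` contains a subgroup
isomorphic to `ℤ × ℤ`. -/
theorem stmt0 :
    Commute (s 0 * s 2) (s 1 * s 3) ∧
    Nonempty ((Subgroup.closure {s 0 * s 2, s 1 * s 3} : Subgroup W) ≃*
      Multiplicative (ℤ × ℤ)) ∧
    ∃ H : Subgroup W, Nonempty (H ≃* Multiplicative (ℤ × ℤ)) := by
  have e : (Subgroup.closure {s 0 * s 2, s 1 * s 3} : Subgroup W) ≃* Multiplicative (ℤ × ℤ) :=
    (MulEquiv.subgroupCongr commute_s0_mul_s2_s1_mul_s3.range_zpowersPairHom).symm.trans <|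
      (MonoidHom.ofInjective injective_zpowersPairHom_s).symm.trans
        (MulEquiv.prodMultiplicative (G := ℤ) (H := ℤ)).symm
  exact ⟨commute_s0_mul_s2_s1_mul_s3, ⟨e⟩, _, ⟨e⟩⟩
end

section
/- Let M be a right-angled Coxeter matrix on a type B, with Coxeter group W(M) and simple reflections t_b for b ∈ B. Suppose i, j, k, l ∈ B form an induced 4-cycle in M. Then there exists a group homomorphism from W (the right-angled Coxeter group of the 4-cycle) to W(M) sending s₁ ↦ t_i, s₂ ↦ t_j, s₃ ↦ t_k, s₄ ↦ t_l, and this homomorphism is injective. -/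
/-- A Coxeter matrix is *right-angled* if every off-diagonal entry is `0` (meaning `∞`, no
relation imposed) or `2`. -/
def CoxeterMatrix.IsRightAngled {B : Type*} (M : CoxeterMatrix B) : Prop :=
  ∀ i j : B, i ≠ j → M i j = 0 ∨ M i j = 2

/-- Four indices `i, j, k, l` form an *induced 4-cycle* in the Coxeter matrix `M` if they are
pairwise distinct, cyclically consecutive ones commute (`M i j = M j k = M k l = M l i = 2`)
and the two opposite pairs satisfy no relation (`M i k = 0` and `M j l = 0`). -/
def CoxeterMatrix.InducedFourCycle {B : Type*} (M : CoxeterMatrix B) (i j k l : B) : Prop :=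
  (i ≠ j ∧ i ≠ k ∧ i ≠ l ∧ j ≠ k ∧ j ≠ l ∧ k ≠ l) ∧
  M i j = 2 ∧ M j k = 2 ∧ M k l = 2 ∧ M l i = 2 ∧ M i k = 0 ∧ M j l = 0

/-!
The map `W → W(M)` is split by a retraction `W(M) → W`: send `t_i, t_j, t_k, t_l` to
`s₁, s₂, s₃, s₄` and every other simple reflection to `1`. Since `M` is right-angled, the
only relations to check are that the images are involutions and that the images of
commuting generators commute; this holds because the 4-cycle is induced.
-/

namespace CoxeterMatrix

variable {B B' : Type*}

theorem IsRightAngled.isLiftable {G : Type*} [Monoid G] {M : CoxeterMatrix B}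
    (hM : M.IsRightAngled) {g : B → G} (hsq : ∀ b, g b * g b = 1)
    (hcomm : ∀ a b, M a b = 2 → (g a * g b) ^ 2 = 1) : M.IsLiftable g := by
  intro a b
  rcases eq_or_ne a b with rfl | hab
  · simpa using hsq a
  rcases hM a b hab with h | h <;> rw [h]
  · exact pow_zero _
  · exact hcomm a b h

variable (M : CoxeterMatrix B) (N : CoxeterMatrix B') {v : B' → B}

theorem injective_of_entry_comp_eq (hv : ∀ a b, M (v a) (v b) = N a b) : v.Injective := by
  intro a b hab
  by_contra hne
  exact N.off_diagonal a b hne (by rw [← hv, hab, M.diagonal])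

def inducedHom (hv : ∀ a b, M (v a) (v b) = N a b) : N.Group →* M.Group :=
  N.toCoxeterSystem.lift ⟨fun a ↦ M.simple (v a), fun a b ↦ by
    simpa only [← hv, toCoxeterSystem_simple] using M.toCoxeterSystem.simple_mul_simple_pow (v a) (v b)⟩

theorem inducedHom_simple (hv : ∀ a b, M (v a) (v b) = N a b) (a : B') :
    M.inducedHom N hv (N.simple a) = M.simple (v a) :=
  N.toCoxeterSystem.lift_apply_simple _ a

open Classical in
/-- The retraction of `W(M)` onto the special subgroup on the image of `v`. -/
noncomputable def retraction (hM : M.IsRightAngled) (hv : ∀ a b, M (v a) (v b) = N a b) :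
    M.Group →* N.Group :=
  M.toCoxeterSystem.lift ⟨fun b ↦ if h : ∃ a, v a = b then N.simple h.choose else 1, by
    refine hM.isLiftable (fun b ↦ ?_) (fun b b' hbb' ↦ ?_)
    · split_ifs
      · exact N.toCoxeterSystem.simple_mul_simple_self _
      · exact one_mul 1
    · split_ifs with h h'
      · rw [← h.choose_spec, ← h'.choose_spec, hv] at hbb'
        simpa only [hbb', toCoxeterSystem_simple] using N.toCoxeterSystem.simple_mul_simple_pow h.choose h'.choose
      all_goals simp only [one_mul, mul_one, one_pow]
      all_goals exact N.toCoxeterSystem.simple_sq _⟩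

theorem retraction_simple (hM : M.IsRightAngled) (hv : ∀ a b, M (v a) (v b) = N a b) (a : B') :
    M.retraction N hM hv (M.simple (v a)) = N.simple a := by
  have hex : ∃ a', v a' = v a := ⟨a, rfl⟩
  refine (M.toCoxeterSystem.lift_apply_simple _ (v a)).trans ?_
  rw [dif_pos hex, injective_of_entry_comp_eq M N hv hex.choose_spec]

theorem retraction_comp_inducedHom (hM : M.IsRightAngled)
    (hv : ∀ a b, M (v a) (v b) = N a b) :
    (M.retraction N hM hv).comp (M.inducedHom N hv) = MonoidHom.id N.Group :=
  N.toCoxeterSystem.ext_simple fun a ↦ by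
    simp [inducedHom_simple, retraction_simple]

theorem inducedHom_injective (hM : M.IsRightAngled) (hv : ∀ a b, M (v a) (v b) = N a b) :
    Function.Injective (M.inducedHom N hv) :=
  Function.LeftInverse.injective (g := M.retraction N hM hv)
    (DFunLike.congr_fun (M.retraction_comp_inducedHom N hM hv))

theorem InducedFourCycle.entry_eq {M : CoxeterMatrix B} {i j k l : B}
    (h : M.InducedFourCycle i j k l) (a b : Fin 4) :
    M (![i, j, k, l] a) (![i, j, k, l] b) = C4 a b := by
  obtain ⟨-, hij, hjk, hkl, hli, hik, hjl⟩ := h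
  fin_cases a <;> fin_cases b <;>
    simp [C4, M.symmetric j i, M.symmetric k j, M.symmetric l k, M.symmetric i l,
      M.symmetric k i, M.symmetric l j, *]

end CoxeterMatrix

/-- If `i, j, k, l` form an induced 4-cycle in a right-angled Coxeter matrix `M`, then there is
a group homomorphism from the right-angled Coxeter group `W` of the 4-cycle to the Coxeter
group of `M` sending `s₁ ↦ t_i`, `s₂ ↦ t_j`, `s₃ ↦ t_k`, `s₄ ↦ t_l`, and it is injective. -/
theorem stmt9 {B : Type*} (M : CoxeterMatrix B) (hra : M.IsRightAngled) (i j k l : B)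
    (hcyc : M.InducedFourCycle i j k l) :
    ∃ f : W →* M.Group,
      f (s 0) = M.simple i ∧ f (s 1) = M.simple j ∧
      f (s 2) = M.simple k ∧ f (s 3) = M.simple l ∧
      Function.Injective f :=
  ⟨M.inducedHom C4 hcyc.entry_eq, M.inducedHom_simple C4 hcyc.entry_eq 0,
    M.inducedHom_simple C4 hcyc.entry_eq 1, M.inducedHom_simple C4 hcyc.entry_eq 2,
    M.inducedHom_simple C4 hcyc.entry_eq 3, M.inducedHom_injective C4 hra hcyc.entry_eq⟩
end

section
/- Let M be a right-angled Coxeter matrix on a type B with Coxeter group W(M). If some four indices i, j, k, l ∈ B form an induced 4-cycle in M, then W(M) contains a subgroup isomorphic to ℤ × ℤ (generated by the commuting infinite-order elements t_i t_k and t_j t_l). -/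
/-!
Sending `t_i, t_k` to the two generating reflections `sr 0, sr 1` of the infinite dihedral group
and every other generator to `1` respects the right-angled relations precisely because
`M i k = 0`. The resulting `φ₁ : W(M) →* D∞` maps `t_i t_k` to the translation `r 1`, of infinite
order, and kills `t_j t_l`; symmetrically `φ₂` detects `t_j t_l` and kills `t_i t_k`. So
`(t_i t_k)^m (t_j t_l)^n = 1` forces `m = n = 0`, and the commuting pair generates a free abelian
group of rank two.
-/

namespace Commute

open Subgroup Function

variable {G : Type*} [Group G] {a b : G}

def zpowersCoprod (hab : Commute a b) : Multiplicative ℤ × Multiplicative ℤ →* G :=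
  (zpowersHom G a).noncommCoprod (zpowersHom G b) fun m n => hab.zpow_zpow m.toAdd n.toAdd

theorem zpowersCoprod_apply (hab : Commute a b) (m n : Multiplicative ℤ) :
    hab.zpowersCoprod (m, n) = a ^ m.toAdd * b ^ n.toAdd := rfl

theorem range_zpowersCoprod (hab : Commute a b) : hab.zpowersCoprod.range = closure {a, b} := by
  refine (MonoidHom.noncommCoprod_range _ _ _).trans ?_
  rw [range_zpowersHom, range_zpowersHom,
    zpowers_eq_closure, zpowers_eq_closure, ← Subgroup.closure_union, Set.singleton_union]

theorem injective_zpowersCoprod {H₁ H₂ : Type*} [Group H₁] [Group H₂] (hab : Commute a b)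
    (φ₁ : G →* H₁) (φ₂ : G →* H₂) (ha : ¬IsOfFinOrder (φ₁ a)) (hb₁ : φ₁ b = 1)
    (ha₂ : φ₂ a = 1) (hb : ¬IsOfFinOrder (φ₂ b)) : Injective hab.zpowersCoprod := by
  rw [injective_iff_map_eq_one]
  rintro ⟨m, n⟩ h
  rw [zpowersCoprod_apply] at h
  have hm : φ₁ a ^ m.toAdd = φ₁ a ^ (0 : ℤ) := by simpa [hb₁] using congrArg φ₁ h
  have hn : φ₂ b ^ n.toAdd = φ₂ b ^ (0 : ℤ) := by simpa [ha₂] using congrArg φ₂ h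
  exact Prod.ext (injective_zpow_iff_not_isOfFinOrder.mpr ha hm)
    (injective_zpow_iff_not_isOfFinOrder.mpr hb hn)

theorem nonempty_closure_pair_mulEquiv {H₁ H₂ : Type*} [Group H₁] [Group H₂]
    (hab : Commute a b) (φ₁ : G →* H₁) (φ₂ : G →* H₂) (ha : ¬IsOfFinOrder (φ₁ a))
    (hb₁ : φ₁ b = 1) (ha₂ : φ₂ a = 1) (hb : ¬IsOfFinOrder (φ₂ b)) :
    Nonempty (closure {a, b} ≃* Multiplicative (ℤ × ℤ)) :=
  ⟨(MulEquiv.subgroupCongr hab.range_zpowersCoprod.symm).trans <|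
    (MonoidHom.ofInjective (hab.injective_zpowersCoprod φ₁ φ₂ ha hb₁ ha₂ hb)).symm.trans
      (MulEquiv.prodMultiplicative ℤ ℤ).symm⟩

end Commute

namespace CoxeterMatrix

open DihedralGroup

variable {B : Type*} (M : CoxeterMatrix B)

theorem commute_simple_of_eq_two {p q : B} (h : M p q = 2) :
    Commute (M.simple p) (M.simple q) := by
  have hpow := M.toCoxeterSystem.simple_mul_simple_pow p q
  rwa [h, pow_two, mul_eq_one_iff_eq_inv, mul_inv_rev, CoxeterSystem.inv_simple,
    CoxeterSystem.inv_simple] at hpow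

variable {M}

theorem IsRightAngled.isLiftable_s10 {G : Type*} [Monoid G] (hra : M.IsRightAngled) {f : B → G}
    (hsq : ∀ p, f p * f p = 1) (hcomm : ∀ p q, M p q = 2 → Commute (f p) (f q)) :
    M.IsLiftable f := by
  intro p q
  rcases eq_or_ne p q with rfl | hpq
  · rw [M.diagonal, pow_one, hsq]
  rcases hra p q hpq with h | h
  · rw [h, pow_zero]
  · rw [h, pow_two, (hcomm p q h).symm.mul_mul_mul_comm, hsq, hsq, one_mul]

theorem IsRightAngled.exists_hom_infiniteDihedral (hra : M.IsRightAngled) {i k : B}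
    (hik : M i k = 0) :
    ∃ φ : M.Group →* DihedralGroup 0, φ (M.simple i * M.simple k) = r 1 ∧
      ∀ p, p ≠ i → p ≠ k → φ (M.simple p) = 1 := by
  classical
  let f : B → DihedralGroup 0 := fun p => if p = i then sr 0 else if p = k then sr 1 else 1
  have hf_one : ∀ p, p ≠ i → p ≠ k → f p = 1 := fun p hpi hpk => by simp [f, hpi, hpk]
  have hsq : ∀ p, f p * f p = 1 := fun p => by
    simp only [f]; split_ifs <;> simp
  have hcomm : ∀ p q, M p q = 2 → Commute (f p) (f q) := by
    intro p q hpq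
    have hnot_both : ¬((p = i ∨ p = k) ∧ (q = i ∨ q = k)) := by
      rintro ⟨rfl | rfl, rfl | rfl⟩ <;> simp_all [M.symmetric]
    simp only [not_and_or, not_or] at hnot_both
    rcases hnot_both with ⟨hpi, hpk⟩ | ⟨hqi, hqk⟩
    · rw [hf_one p hpi hpk]; exact Commute.one_left _
    · rw [hf_one q hqi hqk]; exact Commute.one_right _
  have hik' : k ≠ i := fun h => by simp [h] at hik
  refine ⟨M.toCoxeterSystem.lift ⟨f, hra.isLiftable_s10 hsq hcomm⟩, ?_, fun p hpi hpk => ?_⟩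
  · rw [map_mul, ← M.toCoxeterSystem_simple, CoxeterSystem.lift_apply_simple,
      CoxeterSystem.lift_apply_simple]
    simp [f, hik']
  · rw [← M.toCoxeterSystem_simple, CoxeterSystem.lift_apply_simple]
    exact hf_one p hpi hpk

end CoxeterMatrix

open DihedralGroup in
/-- If some four indices `i, j, k, l` form an induced 4-cycle in a right-angled Coxeter matrix
`M`, then the Coxeter group of `M` contains a subgroup isomorphic to `ℤ × ℤ`, namely the one
generated by the commuting infinite-order elements `t_i t_k` and `t_j t_l`. -/
theorem stmt10 {B : Type*} (M : CoxeterMatrix B) (hra : M.IsRightAngled) (i j k l : B)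
    (hcyc : M.InducedFourCycle i j k l) :
    Commute (M.simple i * M.simple k) (M.simple j * M.simple l) ∧
    ¬ IsOfFinOrder (M.simple i * M.simple k) ∧ ¬ IsOfFinOrder (M.simple j * M.simple l) ∧
    Nonempty ((Subgroup.closure {M.simple i * M.simple k, M.simple j * M.simple l} :
      Subgroup M.Group) ≃* Multiplicative (ℤ × ℤ)) := by
  obtain ⟨⟨hij, -, hil, hjk, -, hkl⟩, hij₂, hjk₂, hkl₂, hli₂, hik₀, hjl₀⟩ := hcyc
  have hcomm : Commute (M.simple i * M.simple k) (M.simple j * M.simple l) :=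
    .mul_left
      (.mul_right (M.commute_simple_of_eq_two hij₂) (M.commute_simple_of_eq_two hli₂).symm)
      (.mul_right (M.commute_simple_of_eq_two hjk₂).symm (M.commute_simple_of_eq_two hkl₂))
  obtain ⟨φ₁, hφ₁, hφ₁_one⟩ := hra.exists_hom_infiniteDihedral hik₀
  obtain ⟨φ₂, hφ₂, hφ₂_one⟩ := hra.exists_hom_infiniteDihedral hjl₀
  have hφ₁_jl : φ₁ (M.simple j * M.simple l) = 1 := by
    rw [map_mul, hφ₁_one j hij.symm hjk, hφ₁_one l hil.symm hkl.symm, one_mul]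
  have hφ₂_ik : φ₂ (M.simple i * M.simple k) = 1 := by
    rw [map_mul, hφ₂_one i hij hil, hφ₂_one k hjk.symm hkl, one_mul]
  have hr : ¬IsOfFinOrder (r 1 : DihedralGroup 0) := by
    rw [← orderOf_eq_zero_iff, orderOf_r_one]
  refine ⟨hcomm, mt φ₁.isOfFinOrder (hφ₁ ▸ hr), mt φ₂.isOfFinOrder (hφ₂ ▸ hr), ?_⟩
  exact hcomm.nonempty_closure_pair_mulEquiv φ₁ φ₂ (hφ₁ ▸ hr) hφ₁_jl hφ₂_ik (hφ₂ ▸ hr)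
end

section
/- Let λ : Fin 4 → (ZMod 2)² be given by λ₁ = λ₃ = (1,0) and λ₂ = λ₄ = (0,1), and call (i,j) adjacent if (i,j) ∈ {(1,2),(2,3),(3,4),(4,1)}. Let G be the presented group with generators β_{i,g} for i ∈ Fin 4 and g ∈ (ZMod 2)², and relators: β_{i,g}·β_{i,g+λᵢ} for all i and g; β_{i,g}·β_{j,g+λᵢ}·β_{i,g+λⱼ}⁻¹·β_{j,g}⁻¹ for all adjacent pairs (i,j) and all g; and β_{1,g} and β_{2,g} for all g. Then G is isomorphic to ℤ × ℤ. -/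
/-! Write `A = β 2 0` and `B = β 3 0`. The relators `β 0 g = β 1 g = 1` turn the commutation
relators of the adjacent pairs `(1, 2)` and `(3, 0)` into `β 2 (g + (0, 1)) = β 2 g` and
`β 3 (g + (1, 0)) = β 3 g`, and then the relators `β i g * β i (g + lam i) = 1` give
`β 2 (a, b) = A ^ (-1) ^ a` and `β 3 (a, b) = B ^ (-1) ^ b`. So `G` is generated by `A` and `B`,
and the commutation relator of the pair `(2, 3)` now says that `A` and `B` commute. Hence
`(m, n) ↦ A ^ m * B ^ n` is inverse to the homomorphism `G → ℤ²` sending `β 2 (a, b)` to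
`((-1) ^ a, 0)`, `β 3 (a, b)` to `(0, (-1) ^ b)` and the other generators to `0`. -/

/-- The coloring `λ` of the four edges of the square: `λ₁ = λ₃ = (1,0)`, `λ₂ = λ₄ = (0,1)`
(indexed by `Fin 4`, so index `0` is `λ₁`, etc.). -/
def lam : Fin 4 → ZMod 2 × ZMod 2 := ![(1, 0), (0, 1), (1, 0), (0, 1)]

/-- `(i, j)` is an *adjacent* pair of edge indices if it is one of
`(1,2), (2,3), (3,4), (4,1)` (in `Fin 4` indexing: `(0,1), (1,2), (2,3), (3,0)`). -/
def Adj (i j : Fin 4) : Prop := (i.val + 1) % 4 = j.val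

/-- The relator set of the paper's presentation of `π₁(M_F, p₀)`: generators `β_{i,g}` for
`i ∈ Fin 4`, `g ∈ (ZMod 2)²`, and relators `β_{i,g}·β_{i,g+λᵢ}`,
`β_{i,g}·β_{j,g+λᵢ}·β_{i,g+λⱼ}⁻¹·β_{j,g}⁻¹` for adjacent `(i,j)`, and `β_{1,g}`, `β_{2,g}`. -/
def rels : Set (FreeGroup (Fin 4 × (ZMod 2 × ZMod 2))) :=
  {r | (∃ i g, r = FreeGroup.of (i, g) * FreeGroup.of (i, g + lam i)) ∨
       (∃ i j g, Adj i j ∧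
          r = FreeGroup.of (i, g) * FreeGroup.of (j, g + lam i) *
              (FreeGroup.of (i, g + lam j))⁻¹ * (FreeGroup.of (j, g))⁻¹) ∨
       (∃ g, r = FreeGroup.of (0, g) ∨ r = FreeGroup.of (1, g))}

/-- The presented group `G` with generators `β_{i,g}` and the relators `rels`. -/
abbrev G : Type := PresentedGroup rels

lemma ZMod.eq_zero_or_eq_one_of_two (a : ZMod 2) : a = 0 ∨ a = 1 := by
  revert a; decide

namespace G

/-- The paper's generator `β_{i+1,g}`. -/
def β (i : Fin 4) (g : ZMod 2 × ZMod 2) : G := PresentedGroup.of (i, g)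

lemma β_add_lam (i : Fin 4) (g : ZMod 2 × ZMod 2) : β i (g + lam i) = (β i g)⁻¹ :=
  eq_inv_of_mul_eq_one_right (PresentedGroup.one_of_mem (Or.inl ⟨i, g, rfl⟩))

lemma β_mul_β_add_lam {i j : Fin 4} (hij : Adj i j) (g : ZMod 2 × ZMod 2) :
    β i g * β j (g + lam i) = β j g * β i (g + lam j) := by
  have h := PresentedGroup.one_of_mem (rels := rels) (Or.inr (Or.inl ⟨i, j, g, hij, rfl⟩))
  simp only [map_mul, map_inv] at h
  rwa [mul_inv_eq_one, mul_inv_eq_iff_eq_mul] at h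

lemma β_zero (g : ZMod 2 × ZMod 2) : β 0 g = 1 :=
  PresentedGroup.one_of_mem (Or.inr (Or.inr ⟨g, Or.inl rfl⟩))

lemma β_one (g : ZMod 2 × ZMod 2) : β 1 g = 1 :=
  PresentedGroup.one_of_mem (Or.inr (Or.inr ⟨g, Or.inr rfl⟩))

lemma β_two_add_snd (g : ZMod 2 × ZMod 2) : β 2 (g + (0, 1)) = β 2 g := by
  simpa [β_one, lam] using β_mul_β_add_lam (i := 1) (j := 2) rfl g

lemma β_three_add_fst (g : ZMod 2 × ZMod 2) : β 3 (g + (1, 0)) = β 3 g := by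
  simpa [β_zero, lam] using (β_mul_β_add_lam (i := 3) (j := 0) rfl g).symm

def sgn (a : ZMod 2) : ℤ := if a = 0 then 1 else -1

lemma β_two (a b : ZMod 2) : β 2 (a, b) = β 2 0 ^ sgn a := by
  have hsnd : β 2 (a, 1) = β 2 (a, 0) := by simpa using β_two_add_snd (a, 0)
  have hfst : β 2 (1, 0) = (β 2 0)⁻¹ := by simpa [lam] using β_add_lam 2 0
  obtain rfl | rfl := ZMod.eq_zero_or_eq_one_of_two a <;>
    obtain rfl | rfl := ZMod.eq_zero_or_eq_one_of_two b <;>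
    simp [sgn, hsnd, hfst, Prod.mk_zero_zero]

lemma β_three (a b : ZMod 2) : β 3 (a, b) = β 3 0 ^ sgn b := by
  have hfst : β 3 (1, b) = β 3 (0, b) := by simpa using β_three_add_fst (0, b)
  have hsnd : β 3 (0, 1) = (β 3 0)⁻¹ := by simpa [lam] using β_add_lam 3 0
  obtain rfl | rfl := ZMod.eq_zero_or_eq_one_of_two a <;>
    obtain rfl | rfl := ZMod.eq_zero_or_eq_one_of_two b <;>
    simp [sgn, hsnd, hfst, Prod.mk_zero_zero]

lemma commute_β_two_β_three : Commute (β 2 0) (β 3 0) :=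
  (commute_iff_eq _ _).mpr <| by
    simpa [lam, β_two, β_three, sgn] using β_mul_β_add_lam (i := 2) (j := 3) rfl 0

def toProdOnGenerators (x : Fin 4 × (ZMod 2 × ZMod 2)) : Multiplicative (ℤ × ℤ) :=
  if x.1 = 2 then .ofAdd (sgn x.2.1, 0) else if x.1 = 3 then .ofAdd (0, sgn x.2.2) else 1

lemma lift_toProdOnGenerators_eq_one :
    ∀ r ∈ rels, FreeGroup.lift toProdOnGenerators r = 1 := by
  rintro r (⟨i, ⟨a, b⟩, rfl⟩ | ⟨i, j, ⟨a, b⟩, hij, rfl⟩ | ⟨g, rfl | rfl⟩)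
  · simp only [map_mul, FreeGroup.lift_apply_of]
    fin_cases i <;> revert a b <;> decide
  · simp only [map_mul, map_inv, FreeGroup.lift_apply_of]
    unfold Adj at hij
    revert a b hij
    fin_cases i <;> fin_cases j <;> decide
  all_goals simp [toProdOnGenerators]

noncomputable def toProd : G →* Multiplicative (ℤ × ℤ) :=
  PresentedGroup.toGroup lift_toProdOnGenerators_eq_one

noncomputable def ofProd : Multiplicative (ℤ × ℤ) →* G where
  toFun z := β 2 0 ^ z.toAdd.1 * β 3 0 ^ z.toAdd.2
  map_one' := by simp
  map_mul' x y := by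
    simp only [toAdd_mul, Prod.fst_add, Prod.snd_add, zpow_add]
    exact (commute_β_two_β_three.zpow_zpow _ _).mul_mul_mul_comm _ _

lemma ofProd_comp_toProd : ofProd.comp toProd = MonoidHom.id G := by
  refine PresentedGroup.ext fun ⟨i, a, b⟩ => ?_
  simp only [MonoidHom.comp_apply, MonoidHom.id_apply, toProd, PresentedGroup.toGroup.of]
  change ofProd (toProdOnGenerators (i, a, b)) = β i (a, b)
  fin_cases i
  · simp [toProdOnGenerators, β_zero]
  · simp [toProdOnGenerators, β_one]
  · simp [toProdOnGenerators, ofProd, β_two]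
  · simp [toProdOnGenerators, ofProd, β_three]

lemma toProd_comp_ofProd : toProd.comp ofProd = MonoidHom.id _ := by
  refine MonoidHom.ext fun z => ?_
  change toProd (β 2 0 ^ z.toAdd.1 * β 3 0 ^ z.toAdd.2) = z
  rw [map_mul, map_zpow, map_zpow]
  apply Multiplicative.toAdd.injective
  simp [toProd, β, PresentedGroup.toGroup.of, toProdOnGenerators, sgn]

end G

/-- The presented group `G` (the paper's presentation of `π₁(M_F, p₀)` for the coloring
`(e₁, e₂, e₁, e₂)`) is isomorphic to `ℤ × ℤ`. -/
theorem stmt13 : Nonempty (G ≃* Multiplicative (ℤ × ℤ)) :=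
  ⟨G.toProd.toMulEquiv G.ofProd G.ofProd_comp_toProd G.toProd_comp_ofProd⟩
end

section
/- Let λ : Fin 4 → (ZMod 2)² be given by λ₁ = λ₃ = (1,0) and λ₂ = λ₄ = (0,1), and call (i,j) adjacent if (i,j) ∈ {(1,2),(2,3),(3,4),(4,1)}. Let G be the presented group with generators β_{i,g} for i ∈ Fin 4 and g ∈ (ZMod 2)², and relators: β_{i,g}·β_{i,g+λᵢ} for all i and g; β_{i,g}·β_{j,g+λᵢ}·β_{i,g+λⱼ}⁻¹·β_{j,g}⁻¹ for all adjacent pairs (i,j) and all g; and β_{1,g} and β_{2,g} for all g. Let γ : (ZMod 2)² → W be γ(a,b) = s₁^a · s₂^b, let ψ : G → W be the homomorphism determined by β_{i,g} ↦ γ(g + λᵢ) · sᵢ · γ(g), and let φ : W → (ZMod 2)² be the homomorphism with φ(s₁) = φ(s₃) = (1,0) and φ(s₂) = φ(s₄) = (0,1). Then ψ is injective and its image equals ker φ; i.e. the sequence 1 → G → W → (ZMod 2)² → 1, with maps ψ and φ, is exact. -/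
/-- The map `γ : (ZMod 2)² → W`, `γ(a,b) = s₁^a · s₂^b`. -/
def gam (p : ZMod 2 × ZMod 2) : W := s 0 ^ p.1.val * s 1 ^ p.2.val

/-!
Translation of the second index, `β_{i,g} ↦ β_{i,g+a}`, preserves the relators, so `(ℤ/2)²` acts
on `G` and we can form `K = G ⋊ (ℤ/2)²`. The elements `(β_{i,λᵢ}, λᵢ)` of `K` are involutions, and
they commute for adjacent `i, j`: the relators force `β_{3,g}` to depend only on `g.1`, `β_{4,g}`
only on `g.2`, and the two families to commute. Hence `sᵢ ↦ (β_{i,λᵢ}, λᵢ)` defines `Θ : W → K`.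
Conversely, translation by `a` corresponds under `ψ` to conjugation by `γ(a)`, so `ψ` and `γ`
assemble to `Π : K → W`. On generators, `Θ ∘ ψ` is the inclusion of `G`, `Π ∘ Θ = id`, and `Θ`
followed by the projection `K → (ℤ/2)²` is `φ`; exactness of `1 → G → K → (ℤ/2)² → 1` then
transfers to `ψ` and `φ`.
-/

open Multiplicative

local notation "𝔽₂²" => ZMod 2 × ZMod 2

section SemidirectProduct

variable {N H E : Type*} [Group N] [Group H] [Group E] {τ : H →* MulAut N}

theorem injective_and_range_eq_ker_of_semidirectProduct (ψ : N →* E) (φ : E →* H)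
    (Θ : E →* N ⋊[τ] H) (Φ : N ⋊[τ] H →* E) (hΘψ : Θ.comp ψ = SemidirectProduct.inl)
    (hΦΘ : Φ.comp Θ = MonoidHom.id E) (hφ : SemidirectProduct.rightHom.comp Θ = φ) :
    Function.Injective ψ ∧ ψ.range = φ.ker := by
  have hΘψ' (n : N) : Θ (ψ n) = SemidirectProduct.inl n := DFunLike.congr_fun hΘψ n
  have hΦΘ' (w : E) : Φ (Θ w) = w := DFunLike.congr_fun hΦΘ w
  refine ⟨fun u v huv ↦ SemidirectProduct.inl_injective (by rw [← hΘψ', ← hΘψ', huv]),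
    le_antisymm ?_ fun w hw ↦ ?_⟩
  · rintro _ ⟨n, rfl⟩
    rw [MonoidHom.mem_ker, ← hφ, MonoidHom.comp_apply, hΘψ', SemidirectProduct.rightHom_inl]
  · obtain ⟨n, hn⟩ : Θ w ∈ (SemidirectProduct.inl : N →* N ⋊[τ] H).range := by
      rwa [SemidirectProduct.range_inl_eq_ker_rightHom, MonoidHom.mem_ker,
        ← MonoidHom.comp_apply, hφ]
    exact ⟨n, by rw [← hΦΘ' (ψ n), hΘψ', hn, hΦΘ']⟩

end SemidirectProduct

theorem mul_pow_two_eq_one_iff_commute {M : Type*} [Group M] {a b : M} (ha : a * a = 1)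
    (hb : b * b = 1) : (a * b) ^ 2 = 1 ↔ Commute a b := by
  rw [pow_two, ← eq_inv_iff_mul_eq_one, mul_inv_rev, inv_eq_of_mul_eq_one_right ha,
    inv_eq_of_mul_eq_one_right hb, commute_iff_eq]

theorem pow_val_add_of_mul_self_eq_one {M : Type*} [Monoid M] {x : M} (hx : x * x = 1)
    (a b : ZMod 2) : x ^ (a + b).val = x ^ a.val * x ^ b.val := by
  rw [← pow_add, ZMod.val_add]
  conv_rhs => rw [← Nat.mod_add_div (a.val + b.val) 2, pow_add, pow_mul, pow_two, hx, one_pow,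
    mul_one]

instance : DecidableRel Adj := fun i j ↦ inferInstanceAs (Decidable ((i.val + 1) % 4 = j.val))

theorem C4_M_apply (i j : Fin 4) :
    C4.M i j = if i = j then 1 else if Adj i j ∨ Adj j i then 2 else 0 := rfl

theorem C4_isLiftable {M : Type*} [Group M] {f : Fin 4 → M} (hsq : ∀ i, f i * f i = 1)
    (hcomm : ∀ i j, Adj i j → Commute (f i) (f j)) : C4.IsLiftable f := by
  intro i j
  rw [C4_M_apply]
  split_ifs with hij hadj
  · rw [hij, pow_one, hsq]
  · rw [mul_pow_two_eq_one_iff_commute (hsq i) (hsq j)]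
    exact hadj.elim (hcomm i j) fun h ↦ (hcomm j i h).symm
  · rw [pow_zero]

theorem W.hom_ext {M : Type*} [MulOneClass M] {f g : W →* M} (h : ∀ i, f (s i) = g (s i)) :
    f = g :=
  C4.toCoxeterSystem.ext_simple h

theorem s_mul_self (i : Fin 4) : s i * s i = 1 := C4.toCoxeterSystem.simple_mul_simple_self i

theorem commute_s_zero_s_one : Commute (s 0) (s 1) :=
  (mul_pow_two_eq_one_iff_commute (s_mul_self 0) (s_mul_self 1)).mp
    (C4.toCoxeterSystem.simple_mul_simple_pow 0 1)

theorem gam_zero : gam 0 = 1 := by simp [gam]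

theorem gam_add (a b : 𝔽₂²) : gam (a + b) = gam a * gam b := by
  simp only [gam, Prod.fst_add, Prod.snd_add, pow_val_add_of_mul_self_eq_one (s_mul_self _)]
  exact (commute_s_zero_s_one.pow_pow _ _).mul_mul_mul_comm _ _

theorem gam_mul_self (a : 𝔽₂²) : gam a * gam a = 1 := by
  rw [← gam_add, CharTwo.add_self_eq_zero, gam_zero]

def gamHom : Multiplicative 𝔽₂² →* W := MonoidHom.mk' (fun a ↦ gam a.toAdd) fun _ _ ↦ gam_add _ _

def β (i : Fin 4) (g : 𝔽₂²) : G := PresentedGroup.of (i, g)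

theorem β_mul_β_add_lam (i : Fin 4) (g : 𝔽₂²) : β i g * β i (g + lam i) = 1 :=
  PresentedGroup.one_of_mem (Or.inl ⟨i, g, rfl⟩)

theorem β_mul_β_add_lam_comm {i j : Fin 4} (hij : Adj i j) (g : 𝔽₂²) :
    β i g * β j (g + lam i) = β j g * β i (g + lam j) := by
  have : β i g * β j (g + lam i) * (β i (g + lam j))⁻¹ * (β j g)⁻¹ = 1 :=
    PresentedGroup.one_of_mem (Or.inr (Or.inl ⟨i, j, g, hij, rfl⟩))
  rwa [mul_inv_eq_one, mul_inv_eq_iff_eq_mul] at this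

theorem β_zero (g : 𝔽₂²) : β 0 g = 1 :=
  PresentedGroup.one_of_mem (Or.inr (Or.inr ⟨g, Or.inl rfl⟩))

theorem β_one (g : 𝔽₂²) : β 1 g = 1 :=
  PresentedGroup.one_of_mem (Or.inr (Or.inr ⟨g, Or.inr rfl⟩))

theorem β_two_eq_of_fst_eq {g h : 𝔽₂²} (hgh : g.1 = h.1) : β 2 g = β 2 h := by
  obtain rfl | rfl : h = g ∨ h = g + lam 1 := by revert g h; decide
  · rfl
  · simpa [β_one] using (β_mul_β_add_lam_comm (show Adj 1 2 by decide) g).symm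

theorem β_three_eq_of_snd_eq {g h : 𝔽₂²} (hgh : g.2 = h.2) : β 3 g = β 3 h := by
  obtain rfl | rfl : h = g ∨ h = g + lam 0 := by revert g h; decide
  · rfl
  · simpa [β_zero] using β_mul_β_add_lam_comm (show Adj 3 0 by decide) g

theorem commute_β_two_β_three (g h : 𝔽₂²) : Commute (β 2 g) (β 3 h) := by
  rw [β_two_eq_of_fst_eq (g := g) (h := (g.1, h.2)) rfl,
    β_three_eq_of_snd_eq (g := h) (h := (g.1, h.2)) rfl]
  have := β_mul_β_add_lam_comm (show Adj 2 3 by decide) (g.1, h.2)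
  rwa [β_two_eq_of_fst_eq (g := _ + lam 3) (h := (g.1, h.2)) (by simp [lam]),
    β_three_eq_of_snd_eq (g := _ + lam 2) (h := (g.1, h.2)) (by simp [lam])] at this

theorem adj_cases {i j : Fin 4} (h : Adj i j) :
    i = 0 ∧ j = 1 ∨ i = 1 ∧ j = 2 ∨ i = 2 ∧ j = 3 ∨ i = 3 ∧ j = 0 := by
  revert i j; decide

theorem β_lam_mul_β_lam_add_lam {i j : Fin 4} (hij : Adj i j) :
    β i (lam i) * β j (lam j + lam i) = β j (lam j) * β i (lam i + lam j) := by
  obtain ⟨rfl, rfl⟩ | ⟨rfl, rfl⟩ | ⟨rfl, rfl⟩ | ⟨rfl, rfl⟩ := adj_cases hij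
  · simp only [β_zero, β_one]
  · simpa [β_one] using β_two_eq_of_fst_eq (by decide)
  · rw [β_three_eq_of_snd_eq (g := lam 3 + lam 2) (h := lam 3) (by decide),
      β_two_eq_of_fst_eq (g := lam 2 + lam 3) (h := lam 2) (by decide)]
    exact commute_β_two_β_three _ _
  · simpa [β_zero] using β_three_eq_of_snd_eq (by decide)

theorem rels_mapsTo_shift (a : 𝔽₂²) :
    rels.MapsTo (FreeGroup.map fun p : Fin 4 × 𝔽₂² ↦ (p.1, p.2 + a)) rels := by
  rintro r (⟨i, g, rfl⟩ | ⟨i, j, g, hij, rfl⟩ | ⟨g, rfl | rfl⟩)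
  · exact Or.inl ⟨i, g + a, by simp [add_right_comm]⟩
  · exact Or.inr (Or.inl ⟨i, j, g + a, hij, by simp [add_right_comm]⟩)
  · exact Or.inr (Or.inr ⟨g + a, Or.inl (by simp)⟩)
  · exact Or.inr (Or.inr ⟨g + a, Or.inr (by simp)⟩)

def shift (a : 𝔽₂²) : G →* G := PresentedGroup.map _ (rels_mapsTo_shift a)

theorem shift_comp_shift (a b : 𝔽₂²) :
    (shift a).comp (shift b) = shift (a + b) :=
  PresentedGroup.ext fun ⟨i, g⟩ ↦ show β i (g + b + a) = β i (g + (a + b)) by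
    rw [add_assoc, add_comm b]

theorem shift_zero : shift 0 = MonoidHom.id G :=
  PresentedGroup.ext fun ⟨i, g⟩ ↦ congrArg (β i) (add_zero g)

def shiftAut : Multiplicative 𝔽₂² →* MulAut G where
  toFun a := (shift a.toAdd).toMulEquiv (shift (-a.toAdd))
    (by rw [shift_comp_shift, neg_add_cancel, shift_zero])
    (by rw [shift_comp_shift, add_neg_cancel, shift_zero])
  map_one' := MulEquiv.ext fun x ↦ DFunLike.congr_fun shift_zero x
  map_mul' a b := MulEquiv.ext fun x ↦
    (DFunLike.congr_fun (shift_comp_shift a.toAdd b.toAdd) x).symm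

abbrev K : Type := G ⋊[shiftAut] Multiplicative 𝔽₂²

def simpleK (i : Fin 4) : K := ⟨β i (lam i), ofAdd (lam i)⟩

theorem simpleK_mul_self (i : Fin 4) : simpleK i * simpleK i = 1 :=
  SemidirectProduct.ext (β_mul_β_add_lam i (lam i))
    (by rw [SemidirectProduct.mul_right, simpleK, ← ofAdd_add, CharTwo.add_self_eq_zero]; rfl)

theorem commute_simpleK {i j : Fin 4} (hij : Adj i j) : Commute (simpleK i) (simpleK j) :=
  SemidirectProduct.ext (β_lam_mul_β_lam_add_lam hij) (mul_comm _ _)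

theorem simpleK_eq_inr {i : Fin 4} (h : ∀ g, β i g = 1) :
    simpleK i = SemidirectProduct.inr (ofAdd (lam i)) :=
  SemidirectProduct.ext (h _) rfl

noncomputable def toK : W →* K :=
  C4.toCoxeterSystem.lift ⟨simpleK, C4_isLiftable simpleK_mul_self fun _ _ ↦ commute_simpleK⟩

theorem toK_simple (i : Fin 4) : toK (s i) = simpleK i :=
  C4.toCoxeterSystem.lift_apply_simple _ i

theorem val_nsmul_lam_zero_add_val_nsmul_lam_one (p : 𝔽₂²) :
    p.1.val • lam 0 + p.2.val • lam 1 = p := by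
  revert p; decide

theorem toK_gam (p : 𝔽₂²) : toK (gam p) = SemidirectProduct.inr (ofAdd p) := by
  rw [gam, map_mul, map_pow, map_pow, toK_simple, toK_simple, simpleK_eq_inr β_zero,
    simpleK_eq_inr β_one, ← map_pow SemidirectProduct.inr, ← map_pow SemidirectProduct.inr,
    ← map_mul, ← ofAdd_nsmul, ← ofAdd_nsmul, ← ofAdd_add, val_nsmul_lam_zero_add_val_nsmul_lam_one]

theorem rightHom_comp_toK (φ : W →* Multiplicative 𝔽₂²)
    (h1 : φ (s 0) = ofAdd (1, 0)) (h2 : φ (s 1) = ofAdd (0, 1))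
    (h3 : φ (s 2) = ofAdd (1, 0)) (h4 : φ (s 3) = ofAdd (0, 1)) :
    SemidirectProduct.rightHom.comp toK = φ :=
  W.hom_ext fun i ↦ by
    rw [MonoidHom.comp_apply, toK_simple]
    fin_cases i
    exacts [h1.symm, h2.symm, h3.symm, h4.symm]

section

variable (ψ : G →* W) (hψ : ∀ i g, ψ (β i g) = gam (g + lam i) * s i * gam g)
include hψ

theorem comp_shiftAut_eq_conj_comp (a : Multiplicative 𝔽₂²) :
    ψ.comp (shiftAut a).toMonoidHom = (MulAut.conj (gamHom a)).toMonoidHom.comp ψ :=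
  PresentedGroup.ext fun ⟨i, g⟩ ↦ by
    show ψ (β i (g + a.toAdd)) = gam a.toAdd * ψ (β i g) * (gam a.toAdd)⁻¹
    rw [hψ, hψ, inv_eq_of_mul_eq_one_right (gam_mul_self _), add_right_comm,
      add_comm _ a.toAdd, gam_add a.toAdd, gam_add g a.toAdd]
    simp only [mul_assoc]

noncomputable def ofK : K →* W :=
  SemidirectProduct.lift ψ gamHom (comp_shiftAut_eq_conj_comp ψ hψ)

theorem toK_comp_eq_inl : toK.comp ψ = SemidirectProduct.inl :=
  PresentedGroup.ext fun ⟨i, g⟩ ↦ by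
    show toK (ψ (β i g)) = SemidirectProduct.inl (β i g)
    rw [hψ, map_mul, map_mul, toK_gam, toK_gam, toK_simple]
    refine SemidirectProduct.ext ?_ ?_
    · show 1 * β i (lam i + (g + lam i)) * 1 = β i g
      rw [add_comm g, CharTwo.add_cancel_left, one_mul, mul_one]
    · show ofAdd (g + lam i + lam i + g) = 1
      rw [CharTwo.add_cancel_right, CharTwo.add_self_eq_zero]
      rfl

theorem ofK_comp_toK : (ofK ψ hψ).comp toK = MonoidHom.id W :=
  W.hom_ext fun i ↦ by
    rw [MonoidHom.comp_apply, toK_simple, simpleK, SemidirectProduct.mk_eq_inl_mul_inr, map_mul,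
      ofK, SemidirectProduct.lift_inl, SemidirectProduct.lift_inr]
    show ψ (β i (lam i)) * gam (lam i) = s i
    rw [hψ, CharTwo.add_self_eq_zero, gam_zero, one_mul, mul_assoc, gam_mul_self, mul_one]

end

/-- If `ψ : G → W` is the homomorphism determined by `β_{i,g} ↦ γ(g + λᵢ) · sᵢ · γ(g)` and
`φ : W → (ZMod 2)²` is the homomorphism with `φ(s₁) = φ(s₃) = (1,0)`, `φ(s₂) = φ(s₄) = (0,1)`,
then `ψ` is injective and its image equals `ker φ`; i.e. the sequence
`1 → G → W → (ZMod 2)² → 1` is exact. -/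
theorem stmt15 (ψ : G →* W)
    (hψ : ∀ (i : Fin 4) (g : ZMod 2 × ZMod 2),
      ψ (PresentedGroup.of (i, g)) = gam (g + lam i) * s i * gam g)
    (φ : W →* Multiplicative (ZMod 2 × ZMod 2))
    (h1 : φ (s 0) = Multiplicative.ofAdd (1, 0)) (h2 : φ (s 1) = Multiplicative.ofAdd (0, 1))
    (h3 : φ (s 2) = Multiplicative.ofAdd (1, 0)) (h4 : φ (s 3) = Multiplicative.ofAdd (0, 1)) :
    Function.Injective ψ ∧ ψ.range = φ.ker :=
  injective_and_range_eq_ker_of_semidirectProduct ψ φ toK (ofK ψ hψ) (toK_comp_eq_inl ψ hψ)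
    (ofK_comp_toK ψ hψ) (rightHom_comp_toK φ h1 h2 h3 h4)
end
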